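/- Let λ be a partition, k ≥ 1 an integer, and h an integer with 0 ≤ h ≤ k−1. Then the number of partitions μ ⊇ λ such that μ/λ is a ribbon of size k and height h is exactly one more than the number of partitions ν ⊆ λ such that λ/ν is a ribbon of size k and height h. -/

import Mathlib

/-!
Encode a partition `λ` by its beta-numbers `β_i = λ_i - i`, a strictly decreasing sequence
containing every sufficiently negative integer. Adding a ribbon of size `k` and height `h`
moves one beta-number `b` to the free position `b + k`, jumping over exactly `h` beta-numbers;
so, writing `W b` for the number of beta-numbers in the window `[b, b + k)`, addable ribbons
correspond to the `b` with `W b = h + 1` and `W (b + 1) = h`, and removable ones to the `b`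
with `W b = h` and `W (b + 1) = h + 1`. As `b` increases, `W b` moves by at most one per step,
from `k > h` (far left, where every integer is a beta-number) to `0` (far right), so it crosses
from `h + 1` down to `h` exactly once more than it crosses up.
-/

/-- Two cells of `ℕ × ℕ` are adjacent when they share a side. -/
def CellAdj (a b : ℕ × ℕ) : Prop :=
  (a.1 = b.1 ∧ (a.2 + 1 = b.2 ∨ b.2 + 1 = a.2)) ∨
  (a.2 = b.2 ∧ (a.1 + 1 = b.1 ∨ b.1 + 1 = a.1))

/-- A finite set of cells is connected if any two of its cells are joined by a
path of cells of the set, consecutive ones sharing a side. -/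
def ConnectedCells (S : Finset (ℕ × ℕ)) : Prop :=
  ∀ a ∈ S, ∀ b ∈ S,
    Relation.ReflTransGen (fun x y => x ∈ S ∧ y ∈ S ∧ CellAdj x y) a b

/-- `S` contains no 2 × 2 square of cells. -/
def NoTwoByTwo (S : Finset (ℕ × ℕ)) : Prop :=
  ¬ ∃ i j : ℕ, (i, j) ∈ S ∧ (i + 1, j) ∈ S ∧ (i, j + 1) ∈ S ∧ (i + 1, j + 1) ∈ S

/-- The cells of the skew shape `μ / ν` (`ν` first argument, `μ` second). -/
def skewCells (ν μ : YoungDiagram) : Finset (ℕ × ℕ) :=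
  μ.cells \ ν.cells

/-- `μ / ν` is a ribbon: a nonempty connected skew shape with no 2 × 2 square. -/
def IsRibbon (ν μ : YoungDiagram) : Prop :=
  ν ≤ μ ∧ (skewCells ν μ).Nonempty ∧ ConnectedCells (skewCells ν μ) ∧
    NoTwoByTwo (skewCells ν μ)

/-- The height of the skew shape `μ / ν`: the number of rows it occupies, minus one. -/
def skewHeight (ν μ : YoungDiagram) : ℕ :=
  ((skewCells ν μ).image Prod.fst).card - 1

/-- The sign of the skew shape `μ / ν`, i.e. `(-1) ^ height`. -/
def skewSign (ν μ : YoungDiagram) : ℤ :=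
  (-1) ^ skewHeight ν μ

open Finset

theorem card_down_crossings_eq_card_up_crossings_add_one (N : ℤ → ℤ) (t : ℤ)
    (hN : ∀ b, |N (b + 1) - N b| ≤ 1) {a c : ℤ} (hac : a ≤ c) (ha : t < N a) (hc : N c ≤ t) :
    #{b ∈ Ico a c | N b = t + 1 ∧ N (b + 1) = t} =
      #{b ∈ Ico a c | N b = t ∧ N (b + 1) = t + 1} + 1 := by
  suffices key : ∀ c, a ≤ c → (#{b ∈ Ico a c | N b = t + 1 ∧ N (b + 1) = t} : ℤ) +
      (if t < N c then 1 else 0) = #{b ∈ Ico a c | N b = t ∧ N (b + 1) = t + 1} + 1 by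
    have := key c hac
    rw [if_neg (not_lt.2 hc)] at this
    omega
  intro c hac
  induction c, hac using Int.leInduction with
  | base => simp [ha]
  | succ c hac ih =>
    have hstep := abs_le.1 (hN c)
    have hnotin : c ∉ Ico a c := by simp
    rw [card_filter, card_filter] at ih ⊢
    rw [← insert_Ico_right_eq_Ico_add_one hac, sum_insert hnotin, sum_insert hnotin]
    push_cast at ih ⊢
    split_ifs at ih ⊢ <;> omega

namespace YoungDiagram

theorem le_iff_rowLen_le {ν μ : YoungDiagram} : ν ≤ μ ↔ ∀ i, ν.rowLen i ≤ μ.rowLen i := by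
  refine ⟨fun h i => ?_, fun h => ?_⟩
  · by_contra! hlt
    exact (mem_iff_lt_rowLen.1 (h (mem_iff_lt_rowLen.2 hlt))).false
  · rintro ⟨i, j⟩ hc
    exact mem_iff_lt_rowLen.2 ((mem_iff_lt_rowLen.1 hc).trans_le (h i))

theorem ext_rowLen {μ ν : YoungDiagram} (h : ∀ i, μ.rowLen i = ν.rowLen i) : μ = ν :=
  SetLike.ext fun ⟨i, j⟩ => by rw [mem_iff_lt_rowLen, mem_iff_lt_rowLen, h]

theorem rowLen_eq_zero_of_colLen_le {μ : YoungDiagram} {i : ℕ} (h : μ.colLen 0 ≤ i) :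
    μ.rowLen i = 0 := by
  by_contra hne
  have := mem_iff_lt_colLen.1 (mem_iff_lt_rowLen.2 (Nat.pos_of_ne_zero hne))
  omega

/-- The Young diagram with row lengths `g`, for `g` vanishing from row `T` on. -/
def ofRowLen (g : ℕ → ℕ) (hg : Antitone g) (T : ℕ) : YoungDiagram where
  cells := {c ∈ range T ×ˢ range (g 0) | c.2 < g c.1}
  isLowerSet := by
    rintro a b ⟨h1, h2⟩ ha
    simp only [mem_coe, mem_filter, mem_product, mem_range] at ha ⊢
    have := hg h1
    omega

variable {g : ℕ → ℕ} {hg : Antitone g} {T : ℕ}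

theorem mem_ofRowLen (hT : g T = 0) {i j : ℕ} : (i, j) ∈ ofRowLen g hg T ↔ j < g i := by
  change (i, j) ∈ {c ∈ range T ×ˢ range (g 0) | c.2 < g c.1} ↔ _
  simp only [mem_filter, mem_product, mem_range, and_iff_right_iff_imp]
  intro hj
  have := hg (Nat.zero_le i)
  have : ¬ T ≤ i := fun hTi => by have := hg hTi; omega
  omega

theorem rowLen_ofRowLen (hT : g T = 0) (i : ℕ) : (ofRowLen g hg T).rowLen i = g i := by
  have hmem (j : ℕ) : (i, j) ∈ ofRowLen g hg T ↔ j < g i := mem_ofRowLen hT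
  refine le_antisymm ?_ ?_
  · by_contra! h
    exact ((hmem _).1 (mem_iff_lt_rowLen.2 h)).false
  · by_contra! h
    exact (mem_iff_lt_rowLen.1 ((hmem _).2 h)).false

end YoungDiagram

theorem mem_skewCells {ν μ : YoungDiagram} {i j : ℕ} :
    (i, j) ∈ skewCells ν μ ↔ ν.rowLen i ≤ j ∧ j < μ.rowLen i := by
  simp only [skewCells, mem_sdiff, YoungDiagram.mem_cells, YoungDiagram.mem_iff_lt_rowLen, not_lt]
  exact and_comm

def CellAdjIn (S : Finset (ℕ × ℕ)) (x y : ℕ × ℕ) : Prop :=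
  x ∈ S ∧ y ∈ S ∧ CellAdj x y

instance (S : Finset (ℕ × ℕ)) : Std.Symm (CellAdjIn S) :=
  ⟨fun _ _ ⟨hx, hy, h⟩ => ⟨hy, hx, by unfold CellAdj at *; omega⟩⟩

theorem exists_vertical_of_reflTransGen {S : Finset (ℕ × ℕ)} {a b : ℕ × ℕ}
    (hp : Relation.ReflTransGen (CellAdjIn S) a b) {i : ℕ} (ha : a.1 ≤ i) (hb : i < b.1) :
    ∃ j, (i, j) ∈ S ∧ (i + 1, j) ∈ S := by
  induction hp with
  | refl => omega
  | @tail c d _ hcd ih =>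
    obtain ⟨hc, hd, hadj⟩ := hcd
    by_cases hi : i < c.1
    · exact ih hi
    · obtain ⟨c1, c2⟩ := c
      obtain ⟨d1, d2⟩ := d
      obtain ⟨rfl, rfl, rfl⟩ : c1 = i ∧ d1 = i + 1 ∧ d2 = c2 := by unfold CellAdj at hadj; omega
      exact ⟨_, hc, hd⟩

theorem reflTransGen_of_same_row {ν μ : YoungDiagram} {i j j' : ℕ}
    (h : (i, j) ∈ skewCells ν μ) (h' : (i, j') ∈ skewCells ν μ) :
    Relation.ReflTransGen (CellAdjIn (skewCells ν μ)) (i, j) (i, j') := by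
  wlog hjj : j ≤ j' generalizing j j'
  · exact Std.Symm.symm _ _ (this h' h (by omega))
  obtain ⟨d, rfl⟩ := Nat.exists_eq_add_of_le hjj
  induction d with
  | zero => rfl
  | succ d ih =>
    have hmid : (i, j + d) ∈ skewCells ν μ := by
      rw [mem_skewCells] at h h' ⊢; omega
    exact (ih hmid (by omega)).tail ⟨hmid, h', Or.inl ⟨rfl, Or.inl (by omega)⟩⟩

/-- `μ / ν` occupies exactly the rows `r, …, s`, and consecutive rows share exactly one
column. -/
structure IsRibbonOn (ν μ : YoungDiagram) (r s : ℕ) : Prop where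
  top_le_bottom : r ≤ s
  rowLen_eq : ∀ i, i < r ∨ s < i → μ.rowLen i = ν.rowLen i
  rowLen_lt : ∀ i, r ≤ i → i ≤ s → ν.rowLen i < μ.rowLen i
  rowLen_succ : ∀ i, r ≤ i → i < s → μ.rowLen (i + 1) = ν.rowLen i + 1

theorem IsRibbon.exists_isRibbonOn {ν μ : YoungDiagram} (hR : IsRibbon ν μ) :
    ∃ r s, IsRibbonOn ν μ r s := by
  obtain ⟨hle, hne, hconn, hsq⟩ := hR
  set S := skewCells ν μ
  have hrows : (S.image Prod.fst).Nonempty := hne.image _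
  have hmono := YoungDiagram.le_iff_rowLen_le.1 hle
  have mem_rows : ∀ i, ν.rowLen i < μ.rowLen i → i ∈ S.image Prod.fst := fun i hi =>
    mem_image.2 ⟨(i, ν.rowLen i), mem_skewCells.2 ⟨le_rfl, hi⟩, rfl⟩
  obtain ⟨⟨r, jr⟩, har, hr⟩ := mem_image.1 ((S.image Prod.fst).min'_mem hrows)
  obtain ⟨⟨s, js⟩, has, hs⟩ := mem_image.1 ((S.image Prod.fst).max'_mem hrows)
  simp only at hr hs
  have hpath : Relation.ReflTransGen (CellAdjIn S) (r, jr) (s, js) := hconn _ har _ has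
  have cross := fun i (h1 : r ≤ i) (h2 : i < s) => exists_vertical_of_reflTransGen hpath h1 h2
  refine ⟨r, s, ?_, fun i hi => ?_, fun i h1 h2 => ?_, fun i h1 h2 => ?_⟩
  · rw [hr, hs]; exact min'_le _ _ (max'_mem _ _)
  · refine le_antisymm ?_ (hmono i)
    by_contra! hlt
    have := min'_le _ _ (mem_rows i hlt)
    have := le_max' _ _ (mem_rows i hlt)
    omega
  · obtain hlt | rfl := h2.lt_or_eq
    · obtain ⟨j, hj, -⟩ := cross i h1 hlt
      have := mem_skewCells.1 hj; omega
    · have := mem_skewCells.1 has; omega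
  · obtain ⟨j, hj, hj'⟩ := cross i h1 h2
    have := mem_skewCells.1 hj
    have := mem_skewCells.1 hj'
    refine le_antisymm (not_lt.1 fun hbig => hsq ⟨i, ν.rowLen i, ?_⟩) (by omega)
    have := μ.rowLen_anti i (i + 1) (by omega)
    have := ν.rowLen_anti i (i + 1) (by omega)
    simp only [S, mem_skewCells]
    omega

namespace IsRibbonOn

variable {ν μ : YoungDiagram} {r s : ℕ}

theorem rows_of_mem (hR : IsRibbonOn ν μ r s) {i j : ℕ} (h : (i, j) ∈ skewCells ν μ) :
    r ≤ i ∧ i ≤ s := by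
  have := mem_skewCells.1 h
  by_contra hout
  have := hR.rowLen_eq i (by omega)
  omega

theorem le (hR : IsRibbonOn ν μ r s) : ν ≤ μ := by
  refine YoungDiagram.le_iff_rowLen_le.2 fun i => ?_
  by_cases hi : r ≤ i ∧ i ≤ s
  · exact (hR.rowLen_lt i hi.1 hi.2).le
  · exact (hR.rowLen_eq i (by omega)).ge

theorem reflTransGen_first_cell (hR : IsRibbonOn ν μ r s) {i j : ℕ}
    (h : (i, j) ∈ skewCells ν μ) :
    Relation.ReflTransGen (CellAdjIn (skewCells ν μ)) (i, j) (r, ν.rowLen r) := by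
  obtain ⟨hri, his⟩ := hR.rows_of_mem h
  induction i, hri using Nat.le_induction generalizing j with
  | base =>
    exact reflTransGen_of_same_row h (mem_skewCells.2 ⟨le_rfl, hR.rowLen_lt r le_rfl his⟩)
  | succ i hri ih =>
    have hup : (i, ν.rowLen i) ∈ skewCells ν μ :=
      mem_skewCells.2 ⟨le_rfl, hR.rowLen_lt i hri (by omega)⟩
    have hcorner : (i + 1, ν.rowLen i) ∈ skewCells ν μ := by
      have := hR.rowLen_succ i hri (by omega)
      have := ν.rowLen_anti i (i + 1) (by omega)
      exact mem_skewCells.2 ⟨by omega, by omega⟩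
    exact ((reflTransGen_of_same_row h hcorner).tail
      ⟨hcorner, hup, Or.inr ⟨rfl, Or.inr rfl⟩⟩).trans (ih hup (by omega))

theorem isRibbon (hR : IsRibbonOn ν μ r s) : IsRibbon ν μ := by
  have hfirst : (r, ν.rowLen r) ∈ skewCells ν μ :=
    mem_skewCells.2 ⟨le_rfl, hR.rowLen_lt r le_rfl hR.top_le_bottom⟩
  refine ⟨hR.le, ⟨_, hfirst⟩, fun ⟨a1, a2⟩ ha ⟨b1, b2⟩ hb => ?_, ?_⟩
  · exact (hR.reflTransGen_first_cell ha).trans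
      (Std.Symm.symm _ _ (hR.reflTransGen_first_cell hb))
  · rintro ⟨i, j, h00, -, -, h11⟩
    have := hR.rows_of_mem h00
    have := hR.rows_of_mem h11
    have := hR.rowLen_succ i (by omega) (by omega)
    rw [mem_skewCells] at h00 h11
    omega

theorem image_fst_skewCells (hR : IsRibbonOn ν μ r s) :
    (skewCells ν μ).image Prod.fst = Icc r s := by
  ext i
  simp only [mem_image, mem_Icc]
  constructor
  · rintro ⟨⟨i, j⟩, h, rfl⟩
    exact hR.rows_of_mem h
  · rintro ⟨h1, h2⟩
    exact ⟨(i, ν.rowLen i), mem_skewCells.2 ⟨le_rfl, hR.rowLen_lt i h1 h2⟩, rfl⟩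

theorem skewHeight_eq (hR : IsRibbonOn ν μ r s) : skewHeight ν μ = s - r := by
  rw [skewHeight, hR.image_fst_skewCells, Nat.card_Icc]
  omega

theorem card_skewCells_add (hR : IsRibbonOn ν μ r s) :
    #(skewCells ν μ) + ν.rowLen s = μ.rowLen r + (s - r) := by
  have hfiber : ∀ i, #{c ∈ skewCells ν μ | c.1 = i} = μ.rowLen i - ν.rowLen i := by
    intro i
    rw [← Nat.card_Ico, ← one_mul #(Ico _ _), ← card_singleton i, ← card_product]
    congr 1
    ext ⟨a, b⟩
    simp only [mem_filter, mem_skewCells, mem_product, mem_singleton, mem_Ico]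
    constructor
    · rintro ⟨h, rfl⟩
      exact ⟨rfl, h⟩
    · rintro ⟨rfl, h⟩
      exact ⟨h, rfl⟩
  have hsum : ∀ t, r ≤ t → t ≤ s →
      ∑ i ∈ Icc r t, (μ.rowLen i - ν.rowLen i) + ν.rowLen t = μ.rowLen r + (t - r) := by
    intro t hrt
    induction t, hrt using Nat.le_induction with
    | base =>
      have := hR.rowLen_lt r le_rfl hR.top_le_bottom
      rw [Icc_self, sum_singleton]
      omega
    | succ t hrt ih =>
      intro hts
      have := ih (by omega)
      have := hR.rowLen_succ t hrt hts
      have := hR.rowLen_lt (t + 1) (by omega) hts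
      rw [sum_Icc_succ_top (by omega)]
      omega
  rw [card_eq_sum_card_fiberwise (t := Icc r s) (f := Prod.fst)
    fun ⟨_, _⟩ hc => mem_Icc.2 (hR.rows_of_mem hc)]
  simp_rw [hfiber]
  exact hsum s hR.top_le_bottom le_rfl

theorem top_unique {r' s' : ℕ} (hR : IsRibbonOn ν μ r s) (hR' : IsRibbonOn ν μ r' s') :
    r = r' := by
  wlog hlt : r < r' generalizing r s r' s'
  · obtain hlt' | heq := (not_lt.1 hlt).lt_or_eq
    · exact (this hR' hR hlt').symm
    · exact heq.symm
  have := hR.rowLen_lt r le_rfl hR.top_le_bottom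
  have := hR'.rowLen_eq r (Or.inl hlt)
  omega

end IsRibbonOn

namespace YoungDiagram

variable (μ : YoungDiagram)

def beta (i : ℕ) : ℤ := μ.rowLen i - i

theorem beta_strictAnti : StrictAnti μ.beta := fun i j hij => by
  have := μ.rowLen_anti i j hij.le
  unfold beta
  omega

theorem exists_beta_lt (c : ℤ) : ∃ i, μ.beta i < c :=
  ⟨(μ.rowLen 0 - c + 1).toNat, by
    have := μ.rowLen_anti 0 (μ.rowLen 0 - c + 1).toNat (Nat.zero_le _)
    unfold beta
    omega⟩

/-- The number of beta-numbers `≥ c`. -/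
def betaCount (c : ℤ) : ℕ := Nat.find (μ.exists_beta_lt c)

def windowCount (k : ℕ) (b : ℤ) : ℤ := μ.betaCount b - μ.betaCount (b + k)

variable {μ}

theorem betaCount_eq_iff {c : ℤ} {n : ℕ} :
    μ.betaCount c = n ↔ μ.beta n < c ∧ ∀ i < n, c ≤ μ.beta i := by
  simp only [betaCount, Nat.find_eq_iff, not_lt]

theorem betaCount_beta (n : ℕ) : μ.betaCount (μ.beta n) = n + 1 :=
  betaCount_eq_iff.2 ⟨μ.beta_strictAnti n.lt_succ_self, fun _ hi =>
    μ.beta_strictAnti.antitone (Nat.lt_succ_iff.1 hi)⟩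

theorem betaCount_beta_add_one (n : ℕ) : μ.betaCount (μ.beta n + 1) = n :=
  betaCount_eq_iff.2 ⟨lt_add_one _, fun _ hi => μ.beta_strictAnti hi⟩

theorem betaCount_succ_le_betaCount (c : ℤ) : μ.betaCount (c + 1) ≤ μ.betaCount c :=
  Nat.find_mono fun _ h => h.trans (lt_add_one c)

theorem betaCount_le_betaCount_succ_add_one (c : ℤ) :
    μ.betaCount c ≤ μ.betaCount (c + 1) + 1 := by
  obtain ⟨hlt, -⟩ := betaCount_eq_iff.1 (rfl : μ.betaCount (c + 1) = _)
  refine Nat.find_le ?_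
  have := μ.beta_strictAnti (lt_add_one (μ.betaCount (c + 1)))
  omega

theorem betaCount_eq_of_le_neg_colLen {c : ℤ} (hc : c ≤ -μ.colLen 0) :
    (μ.betaCount c : ℤ) = 1 - c := by
  have key : μ.betaCount c = (1 - c).toNat := by
    refine betaCount_eq_iff.2 ⟨?_, fun i hi => ?_⟩
    · rw [beta, rowLen_eq_zero_of_colLen_le (by omega)]
      omega
    · by_cases hcol : μ.colLen 0 ≤ i
      · rw [beta, rowLen_eq_zero_of_colLen_le hcol]
        omega
      · unfold beta
        omega
  omega

theorem betaCount_eq_zero {c : ℤ} (hc : μ.rowLen 0 < c) : μ.betaCount c = 0 :=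
  betaCount_eq_iff.2 ⟨by unfold beta; omega, fun _ h => absurd h (Nat.not_lt_zero _)⟩

theorem abs_windowCount_succ_sub_le (k : ℕ) (b : ℤ) :
    |μ.windowCount k (b + 1) - μ.windowCount k b| ≤ 1 := by
  have := betaCount_succ_le_betaCount (μ := μ) b
  have := betaCount_le_betaCount_succ_add_one (μ := μ) b
  have := betaCount_succ_le_betaCount (μ := μ) (b + k)
  have := betaCount_le_betaCount_succ_add_one (μ := μ) (b + k)
  rw [abs_le, windowCount, windowCount, add_right_comm]
  omega

theorem windowCount_eq_of_add_le {k : ℕ} {b : ℤ} (hb : b + k ≤ -μ.colLen 0) :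
    μ.windowCount k b = k := by
  rw [windowCount, betaCount_eq_of_le_neg_colLen hb, betaCount_eq_of_le_neg_colLen (by omega)]
  ring

theorem windowCount_eq_zero {k : ℕ} {b : ℤ} (hb : μ.rowLen 0 < b) : μ.windowCount k b = 0 := by
  rw [windowCount, betaCount_eq_zero hb, betaCount_eq_zero (by omega)]
  rfl

variable {k h : ℕ}

variable (μ k h) in
/-- The beta-number `β_{r+h}` can move up by `k` into the gap above `β_r`, passing exactly the
`h` beta-numbers `β_r, …, β_{r+h-1}`. -/
def AddableAt (r : ℕ) : Prop :=
  μ.beta r < μ.beta (r + h) + k ∧ ∀ i < r, μ.beta (r + h) + k < μ.beta i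

variable (μ k h) in
/-- The beta-number `β_r` can move down by `k` into the gap below `β_{r+h}`, passing exactly
the `h` beta-numbers `β_{r+1}, …, β_{r+h}`. -/
def RemovableAt (r : ℕ) : Prop :=
  μ.beta (r + h + 1) < μ.beta r - k ∧ μ.beta r - k < μ.beta (r + h)

theorem AddableAt.windowCount {r : ℕ} (hr : μ.AddableAt k h r) :
    μ.windowCount k (μ.beta (r + h)) = h + 1 ∧ μ.windowCount k (μ.beta (r + h) + 1) = h := by
  have e1 : μ.betaCount (μ.beta (r + h) + k) = r :=
    betaCount_eq_iff.2 ⟨hr.1, fun i hi => (hr.2 i hi).le⟩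
  have e2 : μ.betaCount (μ.beta (r + h) + 1 + k) = r :=
    betaCount_eq_iff.2 ⟨by linarith [hr.1], fun i hi => by linarith [hr.2 i hi]⟩
  rw [YoungDiagram.windowCount, YoungDiagram.windowCount, e1, e2, betaCount_beta,
    betaCount_beta_add_one]
  push_cast
  constructor <;> ring

theorem RemovableAt.windowCount {r : ℕ} (hr : μ.RemovableAt k h r) :
    μ.windowCount k (μ.beta r - k) = h ∧ μ.windowCount k (μ.beta r - k + 1) = h + 1 := by
  have hle : ∀ i < r + h + 1, μ.beta (r + h) ≤ μ.beta i := fun i hi =>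
    μ.beta_strictAnti.antitone (Nat.lt_succ_iff.1 hi)
  have e1 : μ.betaCount (μ.beta r - k) = r + h + 1 :=
    betaCount_eq_iff.2 ⟨hr.1, fun i hi => by linarith [hle i hi, hr.2]⟩
  have e2 : μ.betaCount (μ.beta r - k + 1) = r + h + 1 :=
    betaCount_eq_iff.2 ⟨by linarith [hr.1], fun i hi => by linarith [hle i hi, hr.2]⟩
  rw [YoungDiagram.windowCount, YoungDiagram.windowCount, e1, e2, sub_add_cancel,
    show μ.beta r - k + 1 + k = μ.beta r + 1 by ring, betaCount_beta, betaCount_beta_add_one]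
  push_cast
  constructor <;> ring

theorem exists_addableAt_of_windowCount {b : ℤ} (h1 : μ.windowCount k b = h + 1)
    (h2 : μ.windowCount k (b + 1) = h) : ∃ r, μ.AddableAt k h r ∧ μ.beta (r + h) = b := by
  have := betaCount_le_betaCount_succ_add_one (μ := μ) b
  have := betaCount_succ_le_betaCount (μ := μ) (b + k)
  rw [YoungDiagram.windowCount] at h1 h2
  rw [add_right_comm] at h2
  set r := μ.betaCount (b + k + 1) with hr
  obtain ⟨-, hb⟩ := betaCount_eq_iff.1 (show μ.betaCount b = r + h + 1 by omega)
  obtain ⟨hb1, -⟩ := betaCount_eq_iff.1 (show μ.betaCount (b + 1) = r + h by omega)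
  obtain ⟨hbk, -⟩ := betaCount_eq_iff.1 (show μ.betaCount (b + k) = r by omega)
  obtain ⟨-, hr⟩ := betaCount_eq_iff.1 hr.symm
  have hbeta : μ.beta (r + h) = b := by linarith [hb (r + h) (lt_add_one _)]
  refine ⟨r, ⟨?_, fun i hi => ?_⟩, hbeta⟩ <;> rw [hbeta]
  · exact hbk
  · linarith [hr i hi]

theorem exists_removableAt_of_windowCount {b : ℤ} (h1 : μ.windowCount k b = h)
    (h2 : μ.windowCount k (b + 1) = h + 1) :
    ∃ r, μ.RemovableAt k h r ∧ μ.beta r - k = b := by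
  have := betaCount_succ_le_betaCount (μ := μ) b
  have := betaCount_le_betaCount_succ_add_one (μ := μ) (b + k)
  rw [YoungDiagram.windowCount] at h1 h2
  rw [add_right_comm] at h2
  set r := μ.betaCount (b + k + 1) with hr
  obtain ⟨hb, -⟩ := betaCount_eq_iff.1 (show μ.betaCount b = r + h + 1 by omega)
  obtain ⟨-, hb1⟩ := betaCount_eq_iff.1 (show μ.betaCount (b + 1) = r + h + 1 by omega)
  obtain ⟨-, hbk⟩ := betaCount_eq_iff.1 (show μ.betaCount (b + k) = r + 1 by omega)
  obtain ⟨hr, -⟩ := betaCount_eq_iff.1 hr.symm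
  have hbeta : μ.beta r - k = b := by linarith [hbk r (lt_add_one _)]
  refine ⟨r, ⟨?_, ?_⟩, hbeta⟩ <;> rw [hbeta]
  · exact hb
  · linarith [hb1 (r + h) (lt_add_one _)]

section Add

variable {lam : YoungDiagram} {r : ℕ}

variable (lam k h r) in
def addRowLen (i : ℕ) : ℕ :=
  if i < r ∨ r + h < i then lam.rowLen i
  else if i = r then lam.rowLen (r + h) + k - h
  else lam.rowLen (i - 1) + 1

theorem AddableAt.antitone_addRowLen (hr : lam.AddableAt k h r) :
    Antitone (lam.addRowLen k h r) := by
  refine antitone_nat_of_succ_le fun i => ?_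
  have := lam.rowLen_anti i (i + 1) (by omega)
  have := lam.rowLen_anti (i - 1) i (by omega)
  have := hr.1
  have := hr.2 i
  simp only [addRowLen, beta, Nat.add_sub_cancel] at *
  split_ifs <;> subst_vars <;> omega

theorem addRowLen_eq_zero : lam.addRowLen k h r (r + h + 1 + lam.colLen 0) = 0 := by
  rw [addRowLen, if_pos (by omega)]
  exact rowLen_eq_zero_of_colLen_le (by omega)

variable (lam k h r) in
def addRibbon (hr : lam.AddableAt k h r) : YoungDiagram :=
  ofRowLen (lam.addRowLen k h r) hr.antitone_addRowLen (r + h + 1 + lam.colLen 0)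

theorem AddableAt.rowLen_addRibbon (hr : lam.AddableAt k h r) (i : ℕ) :
    (lam.addRibbon k h r hr).rowLen i = lam.addRowLen k h r i :=
  rowLen_ofRowLen addRowLen_eq_zero i

theorem AddableAt.isRibbonOn (hr : lam.AddableAt k h r) :
    IsRibbonOn lam (lam.addRibbon k h r hr) r (r + h) := by
  have := hr.1
  refine ⟨by omega, fun i hi => ?_, fun i h1 h2 => ?_, fun i h1 h2 => ?_⟩ <;>
    simp only [hr.rowLen_addRibbon, addRowLen, beta, Nat.add_sub_cancel] at *
  · rw [if_pos hi]
  · have := lam.rowLen_anti (i - 1) i (by omega)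
    split_ifs <;> subst_vars <;> omega
  · rw [if_neg (by omega), if_neg (by omega)]

theorem AddableAt.card_skewCells (hr : lam.AddableAt k h r) :
    #(skewCells lam (lam.addRibbon k h r hr)) = k := by
  have := hr.isRibbonOn.card_skewCells_add
  have := lam.rowLen_anti r (r + h) (by omega)
  have := hr.1
  rw [hr.rowLen_addRibbon, addRowLen, if_neg (by omega), if_pos rfl] at *
  unfold beta at *
  omega

theorem AddableAt.skewHeight (hr : lam.AddableAt k h r) :
    skewHeight lam (lam.addRibbon k h r hr) = h := by
  rw [hr.isRibbonOn.skewHeight_eq]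
  omega

theorem _root_.IsRibbonOn.addableAt {μ : YoungDiagram} (hR : IsRibbonOn lam μ r (r + h))
    (hk : #(skewCells lam μ) = k) : lam.AddableAt k h r := by
  have := hR.card_skewCells_add
  have := hR.rowLen_lt r le_rfl (by omega)
  refine ⟨by unfold beta; omega, fun i hi => ?_⟩
  have := hR.rowLen_eq i (Or.inl hi)
  have := μ.rowLen_anti i r hi.le
  unfold beta
  omega

theorem _root_.IsRibbonOn.eq_addRibbon {μ : YoungDiagram} (hR : IsRibbonOn lam μ r (r + h))
    (hk : #(skewCells lam μ) = k) : μ = lam.addRibbon k h r (hR.addableAt hk) := by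
  refine ext_rowLen fun i => ?_
  rw [AddableAt.rowLen_addRibbon, addRowLen]
  split_ifs with hout hr
  · exact hR.rowLen_eq i hout
  · have := hR.card_skewCells_add
    subst hr
    omega
  · obtain ⟨j, rfl⟩ : ∃ j, i = j + 1 := ⟨i - 1, by omega⟩
    exact hR.rowLen_succ j (by omega) (by omega)

theorem natCard_addable_ribbons (lam : YoungDiagram) (k h : ℕ) :
    Nat.card {μ // IsRibbon lam μ ∧ #(skewCells lam μ) = k ∧ skewHeight lam μ = h} =
      Nat.card {r // lam.AddableAt k h r} := by
  refine (Nat.card_eq_of_bijective (fun r => ⟨lam.addRibbon k h r.1 r.2,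
    r.2.isRibbonOn.isRibbon, r.2.card_skewCells, r.2.skewHeight⟩) ⟨?_, ?_⟩).symm
  · rintro ⟨r, hr⟩ ⟨r', hr'⟩ hμ
    simp only [Subtype.mk.injEq] at hμ
    exact Subtype.ext (hr.isRibbonOn.top_unique (s' := r' + h) (hμ ▸ hr'.isRibbonOn))
  · rintro ⟨μ, hR, hk, hh⟩
    obtain ⟨r, s, hrs⟩ := hR.exists_isRibbonOn
    obtain rfl : s = r + h := by have := hrs.skewHeight_eq; have := hrs.top_le_bottom; omega
    exact ⟨⟨r, hrs.addableAt hk⟩, Subtype.ext (hrs.eq_addRibbon hk).symm⟩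

end Add

section Remove

variable {lam : YoungDiagram} {r : ℕ}

variable (lam k h r) in
def removeRowLen (i : ℕ) : ℕ :=
  if i < r ∨ r + h < i then lam.rowLen i
  else if i = r + h then lam.rowLen r + h - k
  else lam.rowLen (i + 1) - 1

theorem RemovableAt.antitone_removeRowLen (hr : lam.RemovableAt k h r) :
    Antitone (lam.removeRowLen k h r) := by
  refine antitone_nat_of_succ_le fun i => ?_
  have := lam.rowLen_anti i (i + 1) (by omega)
  have := lam.rowLen_anti (i + 1) (i + 1 + 1) (by omega)
  have : i + 1 = r + h → lam.rowLen (i + 1) = lam.rowLen (r + h) := congrArg lam.rowLen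
  have := hr.1
  have := hr.2
  simp only [removeRowLen, beta] at *
  split_ifs <;> subst_vars <;> omega

theorem removeRowLen_eq_zero : lam.removeRowLen k h r (r + h + 1 + lam.colLen 0) = 0 := by
  rw [removeRowLen, if_pos (by omega)]
  exact rowLen_eq_zero_of_colLen_le (by omega)

variable (lam k h r) in
def removeRibbon (hr : lam.RemovableAt k h r) : YoungDiagram :=
  ofRowLen (lam.removeRowLen k h r) hr.antitone_removeRowLen (r + h + 1 + lam.colLen 0)

theorem RemovableAt.rowLen_removeRibbon (hr : lam.RemovableAt k h r) (i : ℕ) :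
    (lam.removeRibbon k h r hr).rowLen i = lam.removeRowLen k h r i :=
  rowLen_ofRowLen removeRowLen_eq_zero i

theorem RemovableAt.isRibbonOn (hr : lam.RemovableAt k h r) :
    IsRibbonOn (lam.removeRibbon k h r hr) lam r (r + h) := by
  have := hr.1
  have := hr.2
  refine ⟨by omega, fun i hi => ?_, fun i h1 h2 => ?_, fun i h1 h2 => ?_⟩ <;>
    simp only [hr.rowLen_removeRibbon, removeRowLen, beta] at *
  · rw [if_pos hi]
  · have := lam.rowLen_anti i (r + h) h2
    have := lam.rowLen_anti i (i + 1) (by omega)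
    split_ifs <;> subst_vars <;> omega
  · have := lam.rowLen_anti (i + 1) (r + h) h2
    rw [if_neg (by omega), if_neg (by omega)]
    omega

theorem RemovableAt.card_skewCells (hr : lam.RemovableAt k h r) :
    #(skewCells (lam.removeRibbon k h r hr) lam) = k := by
  have := hr.isRibbonOn.card_skewCells_add
  have := hr.1
  have := hr.2
  rw [hr.rowLen_removeRibbon, removeRowLen, if_neg (by omega), if_pos rfl] at *
  unfold beta at *
  omega

theorem RemovableAt.skewHeight (hr : lam.RemovableAt k h r) :
    skewHeight (lam.removeRibbon k h r hr) lam = h := by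
  rw [hr.isRibbonOn.skewHeight_eq]
  omega

theorem _root_.IsRibbonOn.removableAt {ν : YoungDiagram} (hR : IsRibbonOn ν lam r (r + h))
    (hk : #(skewCells ν lam) = k) : lam.RemovableAt k h r := by
  have := hR.card_skewCells_add
  have := hR.rowLen_lt (r + h) (by omega) le_rfl
  have := hR.rowLen_eq (r + h + 1) (Or.inr (by omega))
  have := ν.rowLen_anti (r + h) (r + h + 1) (by omega)
  constructor <;> unfold beta <;> omega

theorem _root_.IsRibbonOn.eq_removeRibbon {ν : YoungDiagram} (hR : IsRibbonOn ν lam r (r + h))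
    (hk : #(skewCells ν lam) = k) : ν = lam.removeRibbon k h r (hR.removableAt hk) := by
  refine ext_rowLen fun i => ?_
  rw [RemovableAt.rowLen_removeRibbon, removeRowLen]
  split_ifs with hout hr
  · exact (hR.rowLen_eq i hout).symm
  · have := hR.card_skewCells_add
    subst hr
    omega
  · have := hR.rowLen_succ i (by omega) (by omega)
    omega

theorem natCard_removable_ribbons (lam : YoungDiagram) (k h : ℕ) :
    Nat.card {ν // IsRibbon ν lam ∧ #(skewCells ν lam) = k ∧ skewHeight ν lam = h} =
      Nat.card {r // lam.RemovableAt k h r} := by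
  refine (Nat.card_eq_of_bijective (fun r => ⟨lam.removeRibbon k h r.1 r.2,
    r.2.isRibbonOn.isRibbon, r.2.card_skewCells, r.2.skewHeight⟩) ⟨?_, ?_⟩).symm
  · rintro ⟨r, hr⟩ ⟨r', hr'⟩ hμ
    simp only [Subtype.mk.injEq] at hμ
    exact Subtype.ext (hr.isRibbonOn.top_unique (s' := r' + h) (hμ ▸ hr'.isRibbonOn))
  · rintro ⟨ν, hR, hk, hh⟩
    obtain ⟨r, s, hrs⟩ := hR.exists_isRibbonOn
    obtain rfl : s = r + h := by have := hrs.skewHeight_eq; have := hrs.top_le_bottom; omega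
    exact ⟨⟨r, hrs.removableAt hk⟩, Subtype.ext (hrs.eq_removeRibbon hk).symm⟩

end Remove

theorem natCard_addableAt (lam : YoungDiagram) (k h : ℕ) :
    Nat.card {r // lam.AddableAt k h r} =
      Nat.card {b : ℤ // lam.windowCount k b = h + 1 ∧ lam.windowCount k (b + 1) = h} := by
  refine Nat.card_eq_of_bijective (fun r => ⟨lam.beta (r.1 + h), r.2.windowCount⟩) ⟨?_, ?_⟩
  · rintro ⟨r, hr⟩ ⟨r', hr'⟩ hbeta
    simp only [Subtype.mk.injEq] at hbeta
    exact Subtype.ext (Nat.add_right_cancel (lam.beta_strictAnti.injective hbeta))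
  · rintro ⟨b, h1, h2⟩
    obtain ⟨r, hr, rfl⟩ := exists_addableAt_of_windowCount h1 h2
    exact ⟨⟨r, hr⟩, rfl⟩

theorem natCard_removableAt (lam : YoungDiagram) (k h : ℕ) :
    Nat.card {r // lam.RemovableAt k h r} =
      Nat.card {b : ℤ // lam.windowCount k b = h ∧ lam.windowCount k (b + 1) = h + 1} := by
  refine Nat.card_eq_of_bijective (fun r => ⟨lam.beta r.1 - k, r.2.windowCount⟩) ⟨?_, ?_⟩
  · rintro ⟨r, hr⟩ ⟨r', hr'⟩ hbeta
    simp only [Subtype.mk.injEq, sub_left_inj] at hbeta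
    exact Subtype.ext (lam.beta_strictAnti.injective hbeta)
  · rintro ⟨b, h1, h2⟩
    obtain ⟨r, hr, rfl⟩ := exists_removableAt_of_windowCount h1 h2
    exact ⟨⟨r, hr⟩, rfl⟩

theorem natCard_windowCount_down_eq_up_add_one (lam : YoungDiagram) {k h : ℕ} (hhk : h < k) :
    Nat.card {b : ℤ // lam.windowCount k b = h + 1 ∧ lam.windowCount k (b + 1) = h} =
      Nat.card {b : ℤ // lam.windowCount k b = h ∧ lam.windowCount k (b + 1) = h + 1} + 1 := by
  set lo : ℤ := -(lam.colLen 0 + k)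
  set hi : ℤ := lam.rowLen 0 + 1
  have hconst : ∀ b ∉ Ico lo hi, lam.windowCount k (b + 1) = lam.windowCount k b := by
    intro b hb
    rw [mem_Ico, not_and_or, not_le, not_lt] at hb
    rcases hb with hb | hb
    · rw [windowCount_eq_of_add_le (by omega), windowCount_eq_of_add_le (by omega)]
    · rw [windowCount_eq_zero (by omega), windowCount_eq_zero (by omega)]
  rw [Nat.subtype_card {b ∈ Ico lo hi | lam.windowCount k b = h + 1 ∧
      lam.windowCount k (b + 1) = h} fun b => ?_,
    Nat.subtype_card {b ∈ Ico lo hi | lam.windowCount k b = h ∧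
      lam.windowCount k (b + 1) = h + 1} fun b => ?_]
  · refine card_down_crossings_eq_card_up_crossings_add_one _ _
      (abs_windowCount_succ_sub_le k) (by omega) ?_ ?_
    · rw [windowCount_eq_of_add_le (by omega)]
      exact_mod_cast hhk
    · rw [windowCount_eq_zero (by omega)]
      positivity
  all_goals
    refine mem_filter.trans ⟨And.right, fun hb => ⟨by_contra fun hout => ?_, hb⟩⟩
    have := hconst b hout
    omega

end YoungDiagram

/-- Shimozono–White: for a partition `λ`, the number of addable ribbons of size
`k` and height `h` is one more than the number of removable ribbons of size `k`
and height `h`. -/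
theorem stmt11 (lam : YoungDiagram) (k h : ℕ) (hk : 1 ≤ k) (hh : h ≤ k - 1) :
    Nat.card {μ : YoungDiagram // IsRibbon lam μ ∧
        (skewCells lam μ).card = k ∧ skewHeight lam μ = h} =
      Nat.card {ν : YoungDiagram // IsRibbon ν lam ∧
        (skewCells ν lam).card = k ∧ skewHeight ν lam = h} + 1 := by
  rw [YoungDiagram.natCard_addable_ribbons, YoungDiagram.natCard_removable_ribbons,
    YoungDiagram.natCard_addableAt, YoungDiagram.natCard_removableAt]
  exact lam.natCard_windowCount_down_eq_up_add_one (by omega)
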